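/- Let p > 3 be prime, ω = exp(2πi/p), a ∈ Z_p \ {0}, b, c ∈ Z_p, and let |f_{a,b,c}⟩ = p^{-1/2} Σ_k ω^{ak³+bk²+ck}|k⟩ and |ψ_B^V⟩ = p^{-1/2} Σ_k ω^{2^{-1}Bk²-Vk}|k⟩. Then for every B ∈ Z_p and V_0 ∈ Z_p, setting V_B = V_0 + (12a)^{-1}(B² - 4Bb) (arithmetic mod p), one has |⟨ψ_B^{V_B}|f_{a,b,c}⟩| = |⟨ψ_0^{V_0}|f_{a,b,c}⟩|. Consequently the multiset of transition probabilities {|⟨ψ_B^V|f_{a,b,c}⟩|² : V ∈ Z_p} is independent of the basis index B (MUB-balancedness of magic states). -/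

import Mathlib

open Complex Matrix BigOperators Finset
open scoped Kronecker

noncomputable section

/-- Additive character `a ↦ exp(2πi a/p)` on `ZMod p`. -/
def chi (p : ℕ) (a : ZMod p) : ℂ := Complex.exp (2 * Real.pi * Complex.I * (a.val : ℂ) / p)

/-- The shift operator `X : |j⟩ ↦ |j+1⟩`. -/
def Xop (p : ℕ) : Matrix (ZMod p) (ZMod p) ℂ := fun j k => if j = k + 1 then 1 else 0

/-- The clock operator `Z : |j⟩ ↦ ω^j |j⟩`. -/
def Zop (p : ℕ) : Matrix (ZMod p) (ZMod p) ℂ := Matrix.diagonal (fun j => chi p j)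

/-- Weyl-Heisenberg displacement operator `D_(x|z) = ω^{2⁻¹ x z} X^x Z^z`. -/
def Dop (p : ℕ) [NeZero p] (x z : ZMod p) : Matrix (ZMod p) (ZMod p) ℂ :=
  chi p ((2 : ZMod p)⁻¹ * x * z) • (Xop p ^ x.val * Zop p ^ z.val)

/-- The stabilizer MUB vector `|ψ_B^V⟩ = p^{-1/2} Σ_k ω^{2⁻¹ B k² - V k} |k⟩`. -/
def psi (p : ℕ) (B V : ZMod p) : ZMod p → ℂ :=
  fun k => ((Real.sqrt p : ℂ))⁻¹ * chi p ((2 : ZMod p)⁻¹ * B * k ^ 2 - V * k)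

/-- The magic state `|f_{a,b,c}⟩ = p^{-1/2} Σ_k ω^{a k³ + b k² + c k} |k⟩`. -/
def magic (p : ℕ) (a b c : ZMod p) : ZMod p → ℂ :=
  fun k => ((Real.sqrt p : ℂ))⁻¹ * chi p (a * k ^ 3 + b * k ^ 2 + c * k)

/-- Rank-one projector `|v⟩⟨v|`. -/
def proj (p : ℕ) (v : ZMod p → ℂ) : Matrix (ZMod p) (ZMod p) ℂ :=
  fun i j => v i * (starRingEnd ℂ) (v j)

/-- The single-qudit operator `S = Σ_B |ψ_B^{-B(B+2⁻¹)}⟩⟨ψ_B^{-B(B+2⁻¹)}|`. -/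
def Sop (p : ℕ) [NeZero p] : Matrix (ZMod p) (ZMod p) ℂ :=
  ∑ B : ZMod p, proj p (psi p B (-B * (B + (2 : ZMod p)⁻¹)))

/-!
Up to the factor `1/p`, `⟨ψ_B^V|f_{a,b,c}⟩` is the cubic exponential sum
`Σ_k ω^{a k³ + (b - B/2) k² + (c + V) k}`. Substituting `k ↦ k + B/(6a)` only multiplies the sum
by a phase, and turns the quadratic coefficient back into `b` and the linear one into
`c + V - (12a)⁻¹ (B² - 4Bb)`. Hence shifting `V` by `(12a)⁻¹ (B² - 4Bb)` maps the moduli for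
basis `B` onto those for basis `0`, and this shift is a bijection of `ℤ/p`.
-/

lemma chi_eq_stdAddChar (p : ℕ) [NeZero p] (x : ZMod p) : chi p x = ZMod.stdAddChar x := by
  rw [ZMod.stdAddChar_apply, ZMod.toCircle_apply, chi]

lemma ZMod.natCast_ne_zero_of_pos_of_lt {p n : ℕ} (hn : 0 < n) (hnp : n < p) :
    (n : ZMod p) ≠ 0 := by
  rw [Ne, ZMod.natCast_eq_zero_iff]
  exact fun h => (Nat.le_of_dvd hn h).not_gt hnp

section CubicSum

variable {R : Type*} [CommRing R] [Fintype R] (ψ : AddChar R ℂ)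

def cubicSum (a β γ : R) : ℂ := ∑ x, ψ (a * x ^ 3 + β * x ^ 2 + γ * x)

lemma cubicSum_eq_mul_shift (a β γ t : R) :
    cubicSum ψ a β γ = ψ (a * t ^ 3 + β * t ^ 2 + γ * t) *
      cubicSum ψ a (β + 3 * a * t) (γ + 3 * a * t ^ 2 + 2 * β * t) := by
  rw [cubicSum, cubicSum, Finset.mul_sum]
  refine (Fintype.sum_equiv (Equiv.addRight t) _ _ fun x => ?_).symm
  rw [← AddChar.map_add_eq_mul, Equiv.coe_addRight]
  ring_nf

lemma norm_cubicSum_shift (a β γ t : R) :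
    ‖cubicSum ψ a β γ‖ = ‖cubicSum ψ a (β + 3 * a * t) (γ + 3 * a * t ^ 2 + 2 * β * t)‖ := by
  rw [cubicSum_eq_mul_shift ψ a β γ t, norm_mul, AddChar.norm_apply, one_mul]

end CubicSum

lemma sum_conj_psi_mul_magic (p : ℕ) [NeZero p] (a b c B V : ZMod p) :
    ∑ k : ZMod p, (starRingEnd ℂ) (psi p B V k) * magic p a b c k
      = ((Real.sqrt p : ℂ))⁻¹ * ((Real.sqrt p : ℂ))⁻¹ *
          cubicSum ZMod.stdAddChar a (b - 2⁻¹ * B) (c + V) := by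
  rw [cubicSum, Finset.mul_sum]
  refine Fintype.sum_congr _ _ fun k => ?_
  simp only [psi, magic, chi_eq_stdAddChar, map_mul, map_inv₀, Complex.conj_ofReal,
    ← AddChar.map_neg_eq_conj]
  rw [mul_mul_mul_comm, ← AddChar.map_add_eq_mul]
  ring_nf

lemma norm_sum_conj_psi_shift_mul_magic (p : ℕ) [Fact p.Prime] (h2 : (2 : ZMod p) ≠ 0)
    (h3 : (3 : ZMod p) ≠ 0) (a b c : ZMod p) (ha : a ≠ 0) (B V₀ : ZMod p) :
    ‖∑ k : ZMod p,
        (starRingEnd ℂ) (psi p B (V₀ + (12 * a)⁻¹ * (B ^ 2 - 4 * B * b)) k) * magic p a b c k‖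
      = ‖∑ k : ZMod p, (starRingEnd ℂ) (psi p 0 V₀ k) * magic p a b c k‖ := by
  have h6 : (6 : ZMod p) ≠ 0 := by
    rw [show (6 : ZMod p) = 2 * 3 by norm_num]; exact mul_ne_zero h2 h3
  have h12 : (12 : ZMod p) ≠ 0 := by
    rw [show (12 : ZMod p) = 2 * 6 by norm_num]; exact mul_ne_zero h2 h6
  simp only [sum_conj_psi_mul_magic, norm_mul]
  congr 1
  rw [norm_cubicSum_shift _ _ _ _ ((6 * a)⁻¹ * B)]
  congr 2 <;> field_simp <;> ring

theorem stmt5 (p : ℕ) [Fact p.Prime] (hp3 : 3 < p) (a b c : ZMod p) (ha : a ≠ 0) :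
    (∀ B V₀ : ZMod p,
      ‖∑ k : ZMod p,
          (starRingEnd ℂ) (psi p B (V₀ + (12 * a)⁻¹ * (B ^ 2 - 4 * B * b)) k) * magic p a b c k‖
        = ‖∑ k : ZMod p, (starRingEnd ℂ) (psi p 0 V₀ k) * magic p a b c k‖) ∧
    (∀ B : ZMod p,
      Multiset.map
          (fun V : ZMod p =>
            ‖∑ k : ZMod p, (starRingEnd ℂ) (psi p B V k) * magic p a b c k‖ ^ 2)
          Finset.univ.val
        = Multiset.map
            (fun V : ZMod p =>
              ‖∑ k : ZMod p, (starRingEnd ℂ) (psi p 0 V k) * magic p a b c k‖ ^ 2)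
            Finset.univ.val) := by
  have h2 : (2 : ZMod p) ≠ 0 :=
    mod_cast ZMod.natCast_ne_zero_of_pos_of_lt two_pos (by omega : 2 < p)
  have h3 : (3 : ZMod p) ≠ 0 := mod_cast ZMod.natCast_ne_zero_of_pos_of_lt three_pos hp3
  have balanced := norm_sum_conj_psi_shift_mul_magic p h2 h3 a b c ha
  refine ⟨balanced, fun B => ?_⟩
  conv_lhs => rw [← Multiset.map_univ_val_equiv
    (Equiv.addRight ((12 * a)⁻¹ * (B ^ 2 - 4 * B * b))), Multiset.map_map]
  exact Multiset.map_congr rfl fun V _ => congrArg (· ^ 2) (balanced B V)
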